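/- Let a ∈ ℝ and r ∈ ℝ with r ≠ 0, set s = (a² + r²)/r, let 𝔤 be the Lie algebra with basis f₁,...,f₅ and structure equations df¹ = 0, df² = r f^{12} + a f^{13} + a f^{24} + (a(r² + a²)/(2r)) f^{25} + (a²/r) f^{34} + (a²(r² + a²)/(2r²)) f^{35}, df³ = a f^{12} + (a²/r) f^{13} − r f^{24} − ((r² + a²)/2) f^{25} − a f^{34} − (a(r² + a²)/(2r)) f^{35}, df⁴ = −((r² + a²)²/(2r²)) f^{15} + ((r² + a²)/r) f^{23}, df⁵ = −2f^{14} − 2f^{23}, and let 𝔤̃ be the Lie algebra with basis e₁,...,e₅ and structure equations de¹ = 0, de² = s e^{34} + (s²/2) e^{35}, de³ = s e^{13}, de⁴ = −(s²/2) e^{15} + s e^{23}, de⁵ = −2e^{14} − 2e^{23}. Then the hypo-contact structure η = f⁵, ω₁ = f^{12} + f^{34}, ω₂ = f^{13} − f^{24}, ω₃ = f^{14} + f^{23} on 𝔤 is equivalent by rotation to the hypo-contact structure η̃ = e⁵, ω̃₁ = e^{12} + e^{34}, ω̃₂ = e^{13} − e^{24}, ω̃₃ = e^{14} + e^{23} on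 𝔤̃. -/

import Mathlib

noncomputable section

/-- Chevalley–Eilenberg differential of a 1-form on a Lie algebra. -/
def dOne {V : Type*} [LieRing V] [LieAlgebra ℝ V] (α : V → ℝ) (x y : V) : ℝ :=
  -α ⁅x, y⁆

/-- Chevalley–Eilenberg differential of a 2-form on a Lie algebra. -/
def dTwo {V : Type*} [LieRing V] [LieAlgebra ℝ V] (ω : V → V → ℝ) (x y z : V) : ℝ :=
  -ω ⁅x, y⁆ z + ω ⁅x, z⁆ y - ω ⁅y, z⁆ x

/-- Chevalley–Eilenberg differential of a 3-form on a Lie algebra. -/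
def dThree {V : Type*} [LieRing V] [LieAlgebra ℝ V] (σ : V → V → V → ℝ)
    (x y z w : V) : ℝ :=
  -σ ⁅x, y⁆ z w + σ ⁅x, z⁆ y w - σ ⁅x, w⁆ y z
    - σ ⁅y, z⁆ x w + σ ⁅y, w⁆ x z - σ ⁅z, w⁆ x y

/-- Wedge product of two 1-forms, as an alternating bilinear map. -/
def wedge1 {V : Type*} [LieRing V] [LieAlgebra ℝ V] (α β : V →ₗ[ℝ] ℝ) :
    V →ₗ[ℝ] V →ₗ[ℝ] ℝ :=
  LinearMap.mk₂ ℝ (fun x y => α x * β y - α y * β x)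
    (fun m₁ m₂ n => by simp [map_add]; ring)
    (fun c m n => by simp [map_smul, smul_eq_mul]; ring)
    (fun m n₁ n₂ => by simp [map_add]; ring)
    (fun c m n => by simp [map_smul, smul_eq_mul]; ring)

/-- Wedge product of a 1-form and a 2-form. -/
def wedge12 {V : Type*} (α : V → ℝ) (ω : V → V → ℝ) (x y z : V) : ℝ :=
  α x * ω y z - α y * ω x z + α z * ω x y

/-- Wedge product of two 2-forms. -/
def wedge22 {V : Type*} (ω τ : V → V → ℝ) (x y z w : V) : ℝ :=
  ω x y * τ z w - ω x z * τ y w + ω x w * τ y z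
    + ω y z * τ x w - ω y w * τ x z + ω z w * τ x y

/-- Wedge product of a 4-form and a 1-form. -/
def wedge41 {V : Type*} (v : V → V → V → V → ℝ) (α : V → ℝ)
    (x₀ x₁ x₂ x₃ x₄ : V) : ℝ :=
  α x₀ * v x₁ x₂ x₃ x₄ - α x₁ * v x₀ x₂ x₃ x₄ + α x₂ * v x₀ x₁ x₃ x₄
    - α x₃ * v x₀ x₁ x₂ x₄ + α x₄ * v x₀ x₁ x₂ x₃

/-- An SU(2)-structure on a 5-dimensional real Lie algebra. -/
structure IsSU2Structure {V : Type*} [LieRing V] [LieAlgebra ℝ V]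
    (η : V →ₗ[ℝ] ℝ) (ω₁ ω₂ ω₃ : V →ₗ[ℝ] V →ₗ[ℝ] ℝ) : Prop where
  alt1 : ∀ x, ω₁ x x = 0
  alt2 : ∀ x, ω₂ x x = 0
  alt3 : ∀ x, ω₃ x x = 0
  vol : ∃ v : V → V → V → V → ℝ,
    wedge22 (fun a b => ω₁ a b) (fun a b => ω₁ a b) = v ∧
    wedge22 (fun a b => ω₂ a b) (fun a b => ω₂ a b) = v ∧
    wedge22 (fun a b => ω₃ a b) (fun a b => ω₃ a b) = v ∧
    wedge22 (fun a b => ω₁ a b) (fun a b => ω₂ a b) = (fun _ _ _ _ => 0) ∧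
    wedge22 (fun a b => ω₁ a b) (fun a b => ω₃ a b) = (fun _ _ _ _ => 0) ∧
    wedge22 (fun a b => ω₂ a b) (fun a b => ω₃ a b) = (fun _ _ _ _ => 0) ∧
    wedge41 v (fun x => η x) ≠ (fun _ _ _ _ _ => 0)
  compat : ∀ X Y : V, (∀ z, ω₃ X z = ω₁ Y z) → 0 ≤ ω₂ X Y

/-- A hypo-contact structure on a 5-dimensional real Lie algebra. -/
structure IsHypoContact {V : Type*} [LieRing V] [LieAlgebra ℝ V]
    (η : V →ₗ[ℝ] ℝ) (ω₁ ω₂ ω₃ : V →ₗ[ℝ] V →ₗ[ℝ] ℝ)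
    extends IsSU2Structure η ω₁ ω₂ ω₃ : Prop where
  contact : ∀ x y, dOne (fun z => η z) x y = -2 * ω₃ x y
  closed1 : ∀ x y z w, dThree (wedge12 (fun z => η z) (fun a b => ω₁ a b)) x y z w = 0
  closed2 : ∀ x y z w, dThree (wedge12 (fun z => η z) (fun a b => ω₂ a b)) x y z w = 0

/-- The Lie algebra `𝔥₁`. -/
def IsH1 (V : Type*) [LieRing V] [LieAlgebra ℝ V] : Prop :=
  ∃ X : Module.Basis (Fin 5) ℝ V,
    ⁅X 0, X 1⁆ = 0 ∧ ⁅X 0, X 2⁆ = 0 ∧ ⁅X 0, X 3⁆ = X 4 ∧ ⁅X 0, X 4⁆ = 0 ∧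
    ⁅X 1, X 2⁆ = X 4 ∧ ⁅X 1, X 3⁆ = 0 ∧ ⁅X 1, X 4⁆ = 0 ∧
    ⁅X 2, X 3⁆ = 0 ∧ ⁅X 2, X 4⁆ = 0 ∧ ⁅X 3, X 4⁆ = 0

/-- The Lie algebra `𝔥₂`. -/
def IsH2 (V : Type*) [LieRing V] [LieAlgebra ℝ V] : Prop :=
  ∃ X : Module.Basis (Fin 5) ℝ V,
    ⁅X 0, X 1⁆ = 0 ∧ ⁅X 0, X 2⁆ = 0 ∧ ⁅X 0, X 3⁆ = 0 ∧ ⁅X 0, X 4⁆ = (2 : ℝ) • X 0 ∧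
    ⁅X 1, X 2⁆ = X 0 ∧ ⁅X 1, X 3⁆ = 0 ∧ ⁅X 1, X 4⁆ = X 1 ∧
    ⁅X 2, X 3⁆ = 0 ∧ ⁅X 2, X 4⁆ = X 2 ∧ ⁅X 3, X 4⁆ = (-3 : ℝ) • X 3

/-- The Lie algebra `𝔥₃`. -/
def IsH3 (V : Type*) [LieRing V] [LieAlgebra ℝ V] : Prop :=
  ∃ X : Module.Basis (Fin 5) ℝ V,
    ⁅X 0, X 1⁆ = 0 ∧ ⁅X 0, X 2⁆ = 0 ∧ ⁅X 0, X 3⁆ = (2 : ℝ) • X 0 ∧ ⁅X 0, X 4⁆ = 0 ∧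
    ⁅X 1, X 2⁆ = X 0 ∧ ⁅X 1, X 3⁆ = X 1 ∧ ⁅X 1, X 4⁆ = -X 2 ∧
    ⁅X 2, X 3⁆ = X 2 ∧ ⁅X 2, X 4⁆ = X 1 ∧ ⁅X 3, X 4⁆ = 0

/-- The Lie algebra `𝔥₄`. -/
def IsH4 (V : Type*) [LieRing V] [LieAlgebra ℝ V] : Prop :=
  ∃ X : Module.Basis (Fin 5) ℝ V,
    ⁅X 0, X 1⁆ = 0 ∧ ⁅X 0, X 2⁆ = 0 ∧ ⁅X 0, X 3⁆ = X 0 ∧ ⁅X 0, X 4⁆ = 0 ∧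
    ⁅X 1, X 2⁆ = 0 ∧ ⁅X 1, X 3⁆ = 0 ∧ ⁅X 1, X 4⁆ = X 1 ∧
    ⁅X 2, X 3⁆ = -X 2 ∧ ⁅X 2, X 4⁆ = -X 2 ∧ ⁅X 3, X 4⁆ = 0

/-- The Lie algebra `𝔥₅`. -/
def IsH5 (V : Type*) [LieRing V] [LieAlgebra ℝ V] : Prop :=
  ∃ X : Module.Basis (Fin 5) ℝ V,
    ⁅X 0, X 1⁆ = 0 ∧ ⁅X 0, X 2⁆ = 0 ∧ ⁅X 0, X 3⁆ = 0 ∧ ⁅X 0, X 4⁆ = X 0 ∧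
    ⁅X 1, X 2⁆ = 0 ∧ ⁅X 1, X 3⁆ = X 0 ∧ ⁅X 1, X 4⁆ = 0 ∧
    ⁅X 2, X 3⁆ = X 1 ∧ ⁅X 2, X 4⁆ = -X 2 ∧ ⁅X 3, X 4⁆ = X 3

/-- `e^{ij}`, the wedge of the `i`-th and `j`-th dual basis 1-forms. -/
def bw {V : Type*} [LieRing V] [LieAlgebra ℝ V] (e : Module.Basis (Fin 5) ℝ V) (i j : Fin 5) :
    V →ₗ[ℝ] V →ₗ[ℝ] ℝ :=
  wedge1 (e.coord i) (e.coord j)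

/-- Two hypo-contact structures are *equivalent by rotation* if there is a Lie algebra
isomorphism pulling one back to a rotation of the other. -/
def EquivByRotation {V : Type*} [LieRing V] [LieAlgebra ℝ V]
    {W : Type*} [LieRing W] [LieAlgebra ℝ W]
    (η : V →ₗ[ℝ] ℝ) (ω₁ ω₂ ω₃ : V →ₗ[ℝ] V →ₗ[ℝ] ℝ)
    (η' : W →ₗ[ℝ] ℝ) (ω₁' ω₂' ω₃' : W →ₗ[ℝ] W →ₗ[ℝ] ℝ) : Prop :=
  ∃ (F : V ≃ₗ⁅ℝ⁆ W) (θ : ℝ),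
    (∀ x, η x = η' (F x)) ∧
    (∀ x y, ω₃ x y = ω₃' (F x) (F y)) ∧
    (∀ x y, ω₁ x y = Real.cos θ * ω₁' (F x) (F y) - Real.sin θ * ω₂' (F x) (F y)) ∧
    (∀ x y, ω₂ x y = Real.sin θ * ω₁' (F x) (F y) + Real.cos θ * ω₂' (F x) (F y))

/-!
The linear map sending `f₁, f₄, f₅` to `e₁, e₄, e₅` and `(f₂, f₃)` to the rotation of `(e₂, e₃)`
by `φ = arg (a + r i)` intertwines the two sets of structure equations once `s = (a² + r²)/r`,
so it is a Lie algebra isomorphism. A rotation in the `e₂e₃`-plane fixes `η̃` and `ω̃₃` (as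
`e^{23}` is the area form of that plane) and rotates the pair `(ω̃₁, ω̃₂)` by `φ`; hence the two
hypo-contact structures are equivalent by rotation through `θ = -φ`.
-/

open Real Module

theorem bw_apply {V : Type*} [LieRing V] [LieAlgebra ℝ V] (b : Basis (Fin 5) ℝ V) (i j : Fin 5)
    (x y : V) : bw b i j x y = b.coord i x * b.coord j y - b.coord i y * b.coord j x :=
  rfl

theorem Module.Basis.coord_lie {ι L : Type*} [LieRing L] [LieAlgebra ℝ L] (b : Basis ι ℝ L)
    (k : ι) (x y : L) : b.coord k ⁅x, y⁆ = -dOne (b.coord k) x y :=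
  (neg_neg _).symm

theorem Module.Basis.coord_equiv_refl {ι V W : Type*} [AddCommGroup V] [Module ℝ V]
    [AddCommGroup W] [Module ℝ W] (f : Basis ι ℝ V) (e : Basis ι ℝ W) (k : ι) (x : V) :
    e.coord k (f.equiv e (Equiv.refl ι) x) = f.coord k x := by
  simp [Basis.equiv]

namespace Module.Basis

variable {ι W : Type*} [AddCommGroup W] [Module ℝ W]

def planeRotationₗ (e : Basis ι ℝ W) (i j : ι) (φ : ℝ) : W →ₗ[ℝ] W :=
  LinearMap.id + (cos φ - 1) • ((e.coord i).smulRight (e i) + (e.coord j).smulRight (e j))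
    + sin φ • ((e.coord i).smulRight (e j) - (e.coord j).smulRight (e i))

variable (e : Basis ι ℝ W) {i j : ι} (φ : ℝ) (x : W)

theorem coord_planeRotationₗ_left (hij : i ≠ j) :
    e.coord i (e.planeRotationₗ i j φ x) = cos φ * e.coord i x - sin φ * e.coord j x := by
  simp [planeRotationₗ, hij]
  ring

theorem coord_planeRotationₗ_right (hij : i ≠ j) :
    e.coord j (e.planeRotationₗ i j φ x) = sin φ * e.coord i x + cos φ * e.coord j x := by
  simp [planeRotationₗ, hij.symm]
  ring

theorem coord_planeRotationₗ_of_ne {k : ι} (hki : k ≠ i) (hkj : k ≠ j) :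
    e.coord k (e.planeRotationₗ i j φ x) = e.coord k x := by
  simp [planeRotationₗ, hki.symm, hkj.symm]

theorem planeRotationₗ_comp_neg (hij : i ≠ j) :
    e.planeRotationₗ i j φ ∘ₗ e.planeRotationₗ i j (-φ) = LinearMap.id := by
  refine LinearMap.ext fun x => e.ext_elem fun k => ?_
  simp only [LinearMap.comp_apply, LinearMap.id_apply, ← coord_apply]
  by_cases hki : k = i
  · subst hki
    simp only [coord_planeRotationₗ_left _ _ _ hij, coord_planeRotationₗ_right _ _ _ hij,
      cos_neg, sin_neg]
    linear_combination (e.coord k x) * cos_sq_add_sin_sq φ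
  by_cases hkj : k = j
  · subst hkj
    simp only [coord_planeRotationₗ_left _ _ _ hij, coord_planeRotationₗ_right _ _ _ hij,
      cos_neg, sin_neg]
    linear_combination (e.coord k x) * cos_sq_add_sin_sq φ
  simp only [coord_planeRotationₗ_of_ne _ _ _ hki hkj]

def planeRotation (hij : i ≠ j) : W ≃ₗ[ℝ] W :=
  .ofLinearMap (e.planeRotationₗ i j φ) (e.planeRotationₗ i j (-φ))
    (e.planeRotationₗ_comp_neg φ hij) (by simpa using e.planeRotationₗ_comp_neg (-φ) hij)

end Module.Basis

section Rotation12

variable {V W : Type*} [LieRing V] [LieAlgebra ℝ V] [LieRing W] [LieAlgebra ℝ W]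
  (f : Basis (Fin 5) ℝ V) (e : Basis (Fin 5) ℝ W) (φ : ℝ)

-- Indices are 0-based: this rotates the plane spanned by the paper's `e₂, e₃`.
def rotation12 : V ≃ₗ[ℝ] W :=
  (f.equiv e (Equiv.refl _)).trans (e.planeRotation φ (by decide : (1 : Fin 5) ≠ 2))

theorem coord_rotation12 (x : V) (k : Fin 5) :
    e.coord k (rotation12 f e φ x) = ![f.coord 0 x, cos φ * f.coord 1 x - sin φ * f.coord 2 x,
      sin φ * f.coord 1 x + cos φ * f.coord 2 x, f.coord 3 x, f.coord 4 x] k := by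
  have h12 : (1 : Fin 5) ≠ 2 := by decide
  change e.coord k (e.planeRotationₗ 1 2 φ (f.equiv e (Equiv.refl _) x)) = _
  fin_cases k <;> dsimp only [Fin.reduceFinMk, Fin.isValue, Matrix.cons_val]
  · rw [e.coord_planeRotationₗ_of_ne φ _ (by decide) (by decide), Basis.coord_equiv_refl]
  · rw [e.coord_planeRotationₗ_left φ _ h12, Basis.coord_equiv_refl, Basis.coord_equiv_refl]
  · rw [e.coord_planeRotationₗ_right φ _ h12, Basis.coord_equiv_refl, Basis.coord_equiv_refl]
  · rw [e.coord_planeRotationₗ_of_ne φ _ (by decide) (by decide), Basis.coord_equiv_refl]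
  · rw [e.coord_planeRotationₗ_of_ne φ _ (by decide) (by decide), Basis.coord_equiv_refl]

theorem bw_one_two_rotation12 (x y : V) :
    bw e 1 2 (rotation12 f e φ x) (rotation12 f e φ y) = bw f 1 2 x y := by
  simp only [bw_apply, coord_rotation12, Matrix.cons_val]
  linear_combination (f.coord 1 x * f.coord 2 y - f.coord 1 y * f.coord 2 x) * cos_sq_add_sin_sq φ

variable (x y : V)

theorem pullback_omega₃_rotation12 :
    (bw e 0 3 + bw e 1 2) (rotation12 f e φ x) (rotation12 f e φ y) =
      (bw f 0 3 + bw f 1 2) x y := by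
  simp only [LinearMap.add_apply, bw_one_two_rotation12]
  simp only [bw_apply, coord_rotation12, Matrix.cons_val]

theorem pullback_omega₁_rotation12 :
    (bw e 0 1 + bw e 2 3) (rotation12 f e φ x) (rotation12 f e φ y) =
      cos φ * (bw f 0 1 + bw f 2 3) x y - sin φ * (bw f 0 2 - bw f 1 3) x y := by
  simp only [LinearMap.add_apply, LinearMap.sub_apply, bw_apply, coord_rotation12, Matrix.cons_val]
  ring

theorem pullback_omega₂_rotation12 :
    (bw e 0 2 - bw e 1 3) (rotation12 f e φ x) (rotation12 f e φ y) =
      sin φ * (bw f 0 1 + bw f 2 3) x y + cos φ * (bw f 0 2 - bw f 1 3) x y := by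
  simp only [LinearMap.add_apply, LinearMap.sub_apply, bw_apply, coord_rotation12, Matrix.cons_val]
  ring

theorem equivByRotation_of_coe_eq_rotation12 (F : V ≃ₗ⁅ℝ⁆ W)
    (hF : ∀ x, F x = rotation12 f e φ x) :
    EquivByRotation (f.coord 4) (bw f 0 1 + bw f 2 3) (bw f 0 2 - bw f 1 3) (bw f 0 3 + bw f 1 2)
      (e.coord 4) (bw e 0 1 + bw e 2 3) (bw e 0 2 - bw e 1 3) (bw e 0 3 + bw e 1 2) := by
  refine ⟨F, -φ, fun x => ?_, fun x y => ?_, fun x y => ?_, fun x y => ?_⟩ <;>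
    simp only [hF, cos_neg, sin_neg]
  · simp only [coord_rotation12, Matrix.cons_val]
  · rw [pullback_omega₃_rotation12]
  · rw [pullback_omega₁_rotation12, pullback_omega₂_rotation12]
    linear_combination (-(bw f 0 1 + bw f 2 3) x y) * cos_sq_add_sin_sq φ
  · rw [pullback_omega₁_rotation12, pullback_omega₂_rotation12]
    linear_combination (-(bw f 0 2 - bw f 1 3) x y) * cos_sq_add_sin_sq φ

end Rotation12

section Families

variable {V W : Type*} [LieRing V] [LieAlgebra ℝ V] [LieRing W] [LieAlgebra ℝ W]

def IsFamily6Basis (a r : ℝ) (f : Basis (Fin 5) ℝ V) : Prop :=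
  (∀ x y, dOne (f.coord 0) x y = 0) ∧
  (∀ x y, dOne (f.coord 1) x y = (r) * bw f 0 1 x y + (a) * bw f 0 2 x y + (a) * bw f 1 3 x y
    + (a*(r^2+a^2)/(2*r)) * bw f 1 4 x y + (a^2/r) * bw f 2 3 x y
    + (a^2*(r^2+a^2)/(2*r^2)) * bw f 2 4 x y) ∧
  (∀ x y, dOne (f.coord 2) x y = (a) * bw f 0 1 x y + (a^2/r) * bw f 0 2 x y + (-r) * bw f 1 3 x y
    + (-((r^2+a^2)/2)) * bw f 1 4 x y + (-a) * bw f 2 3 x y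
    + (-(a*(r^2+a^2)/(2*r))) * bw f 2 4 x y) ∧
  (∀ x y, dOne (f.coord 3) x y =
    (-((r^2+a^2)^2/(2*r^2))) * bw f 0 4 x y + ((r^2+a^2)/r) * bw f 1 2 x y) ∧
  (∀ x y, dOne (f.coord 4) x y = (-2) * bw f 0 3 x y + (-2) * bw f 1 2 x y)

def IsFamily5Basis (s : ℝ) (e : Basis (Fin 5) ℝ W) : Prop :=
  (∀ x y, dOne (e.coord 0) x y = 0) ∧
  (∀ x y, dOne (e.coord 1) x y = (s) * bw e 2 3 x y + (s^2/2) * bw e 2 4 x y) ∧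
  (∀ x y, dOne (e.coord 2) x y = (s) * bw e 0 2 x y) ∧
  (∀ x y, dOne (e.coord 3) x y = (-(s^2/2)) * bw e 0 4 x y + (s) * bw e 1 2 x y) ∧
  (∀ x y, dOne (e.coord 4) x y = (-2) * bw e 0 3 x y + (-2) * bw e 1 2 x y)

theorem rotation12_map_lie {a r l φ : ℝ} {f : Basis (Fin 5) ℝ V} {e : Basis (Fin 5) ℝ W}
    (hV : IsFamily6Basis a r f) (hW : IsFamily5Basis ((a ^ 2 + r ^ 2) / r) e) (hr : r ≠ 0)
    (hl : l ≠ 0) (hcos : cos φ = a / l) (hsin : sin φ = r / l) (x y : V) :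
    rotation12 f e φ ⁅x, y⁆ = ⁅rotation12 f e φ x, rotation12 f e φ y⁆ := by
  obtain ⟨hV0, hV1, hV2, hV3, hV4⟩ := hV
  obtain ⟨hW0, hW1, hW2, hW3, hW4⟩ := hW
  refine e.ext_elem fun k => ?_
  simp only [← Basis.coord_apply, coord_rotation12, e.coord_lie]
  -- `e¹²` goes first: its pullback is invariant only because `cos² φ + sin² φ = 1`,
  -- which `field_simp` cannot use.
  fin_cases k <;>
    simp only [Fin.reduceFinMk, Fin.isValue, Matrix.cons_val, f.coord_lie, hV0, hV1, hV2, hV3, hV4,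
      hW0, hW1, hW2, hW3, hW4, bw_one_two_rotation12] <;>
    simp only [bw_apply, coord_rotation12, Matrix.cons_val, hcos, hsin] <;>
    field_simp <;>
    ring

end Families

theorem equiv_by_rotation_family6_family5 (a r : ℝ) (hr : r ≠ 0)
    (s : ℝ) (hs : s = (a^2 + r^2)/r)
    (V : Type) [LieRing V] [LieAlgebra ℝ V] (f : Module.Basis (Fin 5) ℝ V)
    (W : Type) [LieRing W] [LieAlgebra ℝ W] (e : Module.Basis (Fin 5) ℝ W)
    (hV : (∀ x y : _, dOne (⇑(f.coord 0)) x y = 0) ∧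
      (∀ x y : _, dOne (⇑(f.coord 1)) x y = (r) * bw f 0 1 x y + (a) * bw f 0 2 x y + (a) * bw f 1 3 x y + (a*(r^2+a^2)/(2*r)) * bw f 1 4 x y + (a^2/r) * bw f 2 3 x y + (a^2*(r^2+a^2)/(2*r^2)) * bw f 2 4 x y) ∧
      (∀ x y : _, dOne (⇑(f.coord 2)) x y = (a) * bw f 0 1 x y + (a^2/r) * bw f 0 2 x y + (-r) * bw f 1 3 x y + (-((r^2+a^2)/2)) * bw f 1 4 x y + (-a) * bw f 2 3 x y + (-(a*(r^2+a^2)/(2*r))) * bw f 2 4 x y) ∧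
      (∀ x y : _, dOne (⇑(f.coord 3)) x y = (-((r^2+a^2)^2/(2*r^2))) * bw f 0 4 x y + ((r^2+a^2)/r) * bw f 1 2 x y) ∧
      (∀ x y : _, dOne (⇑(f.coord 4)) x y = (-2) * bw f 0 3 x y + (-2) * bw f 1 2 x y))
    (hW : (∀ x y : _, dOne (⇑(e.coord 0)) x y = 0) ∧
      (∀ x y : _, dOne (⇑(e.coord 1)) x y = (s) * bw e 2 3 x y + (s^2/2) * bw e 2 4 x y) ∧
      (∀ x y : _, dOne (⇑(e.coord 2)) x y = (s) * bw e 0 2 x y) ∧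
      (∀ x y : _, dOne (⇑(e.coord 3)) x y = (-(s^2/2)) * bw e 0 4 x y + (s) * bw e 1 2 x y) ∧
      (∀ x y : _, dOne (⇑(e.coord 4)) x y = (-2) * bw e 0 3 x y + (-2) * bw e 1 2 x y)) :
    EquivByRotation (f.coord 4) (bw f 0 1 + bw f 2 3) (bw f 0 2 - bw f 1 3)
      (bw f 0 3 + bw f 1 2)
      (e.coord 4) (bw e 0 1 + bw e 2 3) (bw e 0 2 - bw e 1 3) (bw e 0 3 + bw e 1 2) := by
  subst hs
  set z : ℂ := ⟨a, r⟩
  have hz : z ≠ 0 := fun h => hr (congrArg Complex.im h)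
  let F : V ≃ₗ⁅ℝ⁆ W :=
    { rotation12 f e z.arg with
      map_lie' := rotation12_map_lie hV hW hr (norm_ne_zero_iff.2 hz) (Complex.cos_arg hz)
        (Complex.sin_arg z) _ _ }
  exact equivByRotation_of_coe_eq_rotation12 f e z.arg F fun _ => rfl

end
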